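/- arXiv:1511.07062 — 3 statements merged into one kernel-verified Lean document; each statement's English description precedes it below -/
import Mathlib

section
/- For every regular uncountable-or-countable infinite cardinal τ such that there exists a Tukey (unbounded) map from τ into ℕ → ℕ with the pointwise order (i.e., τ is Tukey-dominated by ω^ω), there exists a topological group G which admits a local ω^ω-base and whose character — the least cardinality of a neighborhood base at the identity — equals τ. -/
universe u

/-- A topological group admits a local `ω^ω`-base if there is a monotone cofinal map
from `ℕ → ℕ` (pointwise order) to the neighbourhoods of the identity. -/
def LocalOmegaOmegaBase (G : Type u) [Group G] [TopologicalSpace G] : Prop :=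
  ∃ V : (ℕ → ℕ) → Set G, (∀ f, V f ∈ nhds (1 : G)) ∧
    (∀ f g : ℕ → ℕ, f ≤ g → V g ⊆ V f) ∧ ∀ U ∈ nhds (1 : G), ∃ f, V f ⊆ U

/-- The character of a topological group: the least cardinality of a neighbourhood
base at the identity. -/
noncomputable def groupCharacter (G : Type u) [Group G] [TopologicalSpace G] :
    Cardinal.{u} :=
  sInf {c : Cardinal.{u} | ∃ B : Set (Set G), (∀ U ∈ B, U ∈ nhds (1 : G)) ∧
    (∀ U ∈ nhds (1 : G), ∃ b ∈ B, b ⊆ U) ∧ Cardinal.mk B = c}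

noncomputable section StmtAux

open Ordinal Set Function

instance instIsWellOrderToType (o : Ordinal.{u}) :
    IsWellOrder o.ToType (· < ·) := isWellOrder_lt

variable (κ : Cardinal.{u})

/-- The underlying group: functions from (a type of order type) `κ.ord` to `ℤ/2`. -/
abbrev Gp : Type u := κ.ord.ToType → Multiplicative (ZMod 2)

/-- Basic neighbourhoods of `1`: functions vanishing below `b`. -/
def SS (b : κ.ord.ToType) : Set (Gp κ) := {x | ∀ a, a < b → x a = 1}

variable {κ}

lemma one_mem_SS (b : κ.ord.ToType) : (1 : Gp κ) ∈ SS κ b := fun _ _ => rfl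

lemma SS_anti {b b' : κ.ord.ToType} (h : b ≤ b') : SS κ b' ⊆ SS κ b :=
  fun _ hx a ha => hx a (ha.trans_le h)

lemma SS_subset {b b' : κ.ord.ToType} (h : SS κ b ⊆ SS κ b') : b' ≤ b := by
  classical
  by_contra hc
  push_neg at hc
  have h1 : Function.update (1 : Gp κ) b (Multiplicative.ofAdd 1) ∈ SS κ b := by
    intro a ha
    rw [Function.update_of_ne (ne_of_lt ha)]
    rfl
  have h2 := h h1 b hc
  rw [Function.update_self] at h2
  exact absurd h2 (by decide)

lemma SS_inj : Function.Injective (SS κ) := by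
  intro a b hab
  exact le_antisymm (SS_subset (le_of_eq hab.symm)) (SS_subset (le_of_eq hab))

variable (κ)

/-- The group filter basis generated by the subgroups `SS κ b`. -/
def gfb [Nonempty κ.ord.ToType] : GroupFilterBasis (Gp κ) :=
  groupFilterBasisOfComm (Set.range (SS κ))
    (Set.range_nonempty _)
    (by
      rintro x y ⟨a, rfl⟩ ⟨b, rfl⟩
      exact ⟨SS κ (max a b), mem_range_self _,
        subset_inter (SS_anti (le_max_left a b)) (SS_anti (le_max_right a b))⟩)
    (by rintro U ⟨a, rfl⟩; exact one_mem_SS a)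
    (by
      rintro U ⟨a, rfl⟩
      refine ⟨SS κ a, mem_range_self _, ?_⟩
      rintro z ⟨x, hx, y, hy, rfl⟩ i hi
      show x i * y i = 1
      rw [hx i hi, hy i hi, one_mul])
    (by
      rintro U ⟨a, rfl⟩
      refine ⟨SS κ a, mem_range_self _, fun x hx i hi => ?_⟩
      show (x i)⁻¹ = 1
      rw [hx i hi, inv_one])

lemma mem_gfb [Nonempty κ.ord.ToType] {U : Set (Gp κ)} :
    U ∈ gfb κ ↔ ∃ b, SS κ b = U := Iff.rfl

end StmtAux

/-- Corollary 2.8: every regular infinite cardinal `τ` that is Tukey-dominated by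
`ω^ω` (witnessed by an unbounded (Tukey) map from the ordinals below `τ` into `ℕ → ℕ`)
is the character of some topological group admitting a local `ω^ω`-base. -/
theorem stmt16 (κ : Cardinal.{u}) (hreg : κ.IsRegular)
    (hdom : ∃ g : {o : Ordinal.{u} // o < κ.ord} → (ℕ → ℕ),
      ∀ S : Set {o : Ordinal.{u} // o < κ.ord},
        (¬ ∃ b, ∀ s ∈ S, s ≤ b) → ¬ ∃ b : ℕ → ℕ, ∀ s ∈ S, g s ≤ b) :
    ∃ (G : Type u) (iG : Group G) (iT : TopologicalSpace G),
      @IsTopologicalGroup G iT iG ∧ @LocalOmegaOmegaBase G iG iT ∧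
        @groupCharacter G iG iT = κ := by
  classical
  obtain ⟨g, hg⟩ := hdom
  have hord0 : (0 : Ordinal.{u}) < κ.ord := hreg.ord_pos
  haveI : Nonempty κ.ord.ToType := Ordinal.nonempty_toType_iff.mpr hord0.ne'
  let g' : κ.ord.ToType → (ℕ → ℕ) := fun a => g ⟨Ordinal.typein (α := κ.ord.ToType) (· < ·) a, Ordinal.typein_lt_self a⟩
  let A : (ℕ → ℕ) → Set κ.ord.ToType := fun f => {a | g' a ≤ f}
  -- each A f is bounded
  have hbdd : ∀ f, ∃ b, ∀ a ∈ A f, a ≤ b := by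
    intro f
    by_contra hb
    push_neg at hb
    refine hg ((fun a : κ.ord.ToType => (⟨Ordinal.typein (α := κ.ord.ToType) (· < ·) a, Ordinal.typein_lt_self a⟩ :
        {o : Ordinal.{u} // o < κ.ord})) '' A f) ?_ ⟨f, ?_⟩
    · rintro ⟨⟨o, ho⟩, hbo⟩
      have ho' : o < Ordinal.type ((· < ·) : κ.ord.ToType → κ.ord.ToType → Prop) := by
        rwa [Ordinal.type_toType]
      obtain ⟨c, rfl⟩ := Ordinal.typein_surj _ ho'
      obtain ⟨a, haA, hna⟩ := hb c
      have h1 := hbo _ (Set.mem_image_of_mem _ haA)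
      rw [Subtype.mk_le_mk, Ordinal.typein_le_typein] at h1
      exact h1 hna
    · rintro s ⟨a, haA, rfl⟩
      exact haA
  -- the ordinal bound for each f
  let ob : (ℕ → ℕ) → Ordinal.{u} :=
    fun f => sSup ((fun a => Ordinal.typein (α := κ.ord.ToType) (· < ·) a + 1) '' A f)
  have hub : ∀ f b, (∀ a ∈ A f, a ≤ b) →
      (Ordinal.typein (α := κ.ord.ToType) (· < ·) b + 1) ∈
        upperBounds ((fun a => Ordinal.typein (α := κ.ord.ToType) (· < ·) a + 1) '' A f) := by
    intro f b hb
    rintro o ⟨a, ha, rfl⟩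
    have h2 : Ordinal.typein (α := κ.ord.ToType) (· < ·) a ≤ Ordinal.typein (α := κ.ord.ToType) (· < ·) b := by
      rw [Ordinal.typein_le_typein]
      exact not_lt.mpr (hb a ha)
    exact add_le_add_left h2 1
  have hob : ∀ f, ob f < κ.ord ∧ ∀ a ∈ A f, Ordinal.typein (α := κ.ord.ToType) (· < ·) a < ob f := by
    intro f
    obtain ⟨b, hb⟩ := hbdd f
    have hubb := hub f b hb
    constructor
    · refine lt_of_le_of_lt (csSup_le' hubb) ?_
      have hlim := Cardinal.isSuccLimit_ord hreg.aleph0_le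
      have h3 := hlim.succ_lt (Ordinal.typein_lt_self b)
      rwa [← Ordinal.add_one_eq_succ] at h3
    · intro a ha
      have hmem := Set.mem_image_of_mem (fun a => Ordinal.typein (α := κ.ord.ToType) (· < ·) a + 1) ha
      have h4 := le_csSup ⟨_, hubb⟩ hmem
      have h5 : Ordinal.typein (α := κ.ord.ToType) (· < ·) a <
          Ordinal.typein (α := κ.ord.ToType) (· < ·) a + 1 := by
        rw [Ordinal.add_one_eq_succ]
        exact Order.lt_succ _
      exact lt_of_lt_of_le h5 h4
  have hmono : ∀ f f', f ≤ f' → ob f ≤ ob f' := by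
    intro f f' hff
    obtain ⟨b, hb⟩ := hbdd f'
    refine csSup_le_csSup' ⟨_, hub f' b hb⟩ (Set.image_mono ?_)
    intro a ha
    exact le_trans ha hff
  have hltord : ∀ f, ob f < Ordinal.type ((· < ·) : κ.ord.ToType → κ.ord.ToType → Prop) := by
    intro f
    rw [Ordinal.type_toType]
    exact (hob f).1
  let xb : (ℕ → ℕ) → κ.ord.ToType := fun f => Ordinal.enum (α := κ.ord.ToType) (· < ·) ⟨ob f, hltord f⟩
  have hxb_typein : ∀ f, Ordinal.typein (α := κ.ord.ToType) (· < ·) (xb f) = ob f :=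
    fun f => Ordinal.typein_enum _ _
  have hlt_xb : ∀ f, ∀ a ∈ A f, a < xb f := by
    intro f a ha
    have h5 := (hob f).2 a ha
    rw [← hxb_typein f] at h5
    exact (Ordinal.typein_lt_typein _).mp h5
  have hxb_mono : ∀ f f', f ≤ f' → xb f ≤ xb f' := by
    intro f f' h
    have h6 := hmono f f' h
    rw [← hxb_typein f, ← hxb_typein f'] at h6
    rw [Ordinal.typein_le_typein] at h6
    exact not_lt.mp h6
  -- the nhds description
  have hmem_nhds : ∀ U : Set (Gp κ), U ∈ @nhds _ (gfb κ).topology 1 ↔ ∃ b, SS κ b ⊆ U := by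
    intro U
    rw [(gfb κ).nhds_one_hasBasis.mem_iff]
    constructor
    · rintro ⟨V, hV, hVU⟩
      obtain ⟨b, rfl⟩ := (mem_gfb κ).mp hV
      exact ⟨b, hVU⟩
    · rintro ⟨b, hb⟩
      exact ⟨SS κ b, (mem_gfb κ).mpr ⟨b, rfl⟩, hb⟩
  refine ⟨Gp κ, CommGroup.toGroup, (gfb κ).topology, (gfb κ).isTopologicalGroup, ?_, ?_⟩
  · -- local ω^ω base
    refine ⟨fun f => SS κ (xb f), ?_, ?_, ?_⟩
    · intro f
      exact (hmem_nhds _).mpr ⟨xb f, subset_rfl⟩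
    · intro f f' h
      exact SS_anti (hxb_mono f f' h)
    · intro U hU
      obtain ⟨b, hb⟩ := (hmem_nhds U).mp hU
      refine ⟨g' b, subset_trans (SS_anti ?_) hb⟩
      exact le_of_lt (hlt_xb (g' b) b (le_refl (g' b)))
  · -- character
    have hκmem : κ ∈ {c : Cardinal.{u} | ∃ B : Set (Set (Gp κ)),
        (∀ U ∈ B, U ∈ @nhds _ (gfb κ).topology (1 : Gp κ)) ∧
        (∀ U ∈ @nhds _ (gfb κ).topology (1 : Gp κ), ∃ b ∈ B, b ⊆ U) ∧
        Cardinal.mk B = κ} := by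
      refine ⟨Set.range (SS κ), ?_, ?_, ?_⟩
      · rintro U ⟨b, rfl⟩
        exact (hmem_nhds _).mpr ⟨b, subset_rfl⟩
      · intro U hU
        obtain ⟨b, hb⟩ := (hmem_nhds U).mp hU
        exact ⟨SS κ b, Set.mem_range_self b, hb⟩
      · rw [Cardinal.mk_range_eq _ SS_inj, Cardinal.mk_ord_toType]
    show sInf _ = κ
    apply le_antisymm
    · exact csInf_le' hκmem
    · refine le_csInf ⟨κ, hκmem⟩ ?_
      rintro c ⟨B', hB1, hB2, rfl⟩
      by_contra hlt
      push_neg at hlt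
      have hφex : ∀ U : ↥B', ∃ b, SS κ b ⊆ (U : Set (Gp κ)) :=
        fun U => (hmem_nhds U).mp (hB1 U U.2)
      choose φ hφ using hφex
      have hT : Cardinal.mk (Set.range φ) < κ :=
        lt_of_le_of_lt Cardinal.mk_range_le hlt
      have hbT : Set.Bounded (· < ·) (Set.range φ) := by
        have hnc : ¬ IsCofinal (Set.range φ) := fun hc => by
          have := Order.cof_le hc
          rw [Ordinal.cof_toType, hreg.cof_ord] at this
          exact absurd hT (not_lt.mpr this)
        exact not_isCofinal_iff.mp hnc
      obtain ⟨y, hy⟩ := hbT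
      obtain ⟨U, hU, hUy⟩ := hB2 (SS κ y) ((hmem_nhds _).mpr ⟨y, subset_rfl⟩)
      have h1 : SS κ (φ ⟨U, hU⟩) ⊆ SS κ y := (hφ ⟨U, hU⟩).trans hUy
      have h2 : y ≤ φ ⟨U, hU⟩ := SS_subset h1
      exact absurd (hy _ (Set.mem_range_self _)) (not_lt.mpr h2)
end

section
/- Let G be a topological group that is spherically complete: there exists a family B of neighborhoods of the identity forming a base of the neighborhood filter at the identity such that for every sequence (V_n)_{n∈ℕ} of members of B that is (non-strictly) decreasing (V_{n+1} ⊆ V_n) and every sequence (g_n)_{n∈ℕ} of elements of G with g_{n+1}·V_{n+1} ⊆ g_n·V_n for all n, the intersection ⋂_{n∈ℕ} g_n·V_n is non-empty. Then G is a Baire topological space. -/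
open Pointwise

/-- Lemma 2.10: a spherically complete topological group — one having a neighbourhood
base `B` at the identity such that every nested sequence of left translates
`g_{n+1}·V_{n+1} ⊆ g_n·V_n` of (non-strictly decreasing) members of `B` has non-empty
intersection — is a Baire topological space. -/
theorem stmt17 {G : Type*} [Group G] [TopologicalSpace G] [IsTopologicalGroup G]
    (B : Set (Set G))
    (hB1 : ∀ U ∈ B, U ∈ nhds (1 : G))
    (hB2 : ∀ U ∈ nhds (1 : G), ∃ V ∈ B, V ⊆ U)
    (hsc : ∀ (V : ℕ → Set G) (g : ℕ → G), (∀ n, V n ∈ B) →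
      (∀ n, V (n + 1) ⊆ V n) → (∀ n, g (n + 1) • V (n + 1) ⊆ g n • V n) →
      (⋂ n, g n • V n).Nonempty) :
    BaireSpace G := by
  constructor
  intro f hopen hdense
  rw [dense_iff_inter_open]
  intro W hW hWne
  -- key recursive step
  have key : ∀ (g : G) (V : Set G) (n : ℕ), ∃ p : G × Set G, V ∈ B →
      p.2 ∈ B ∧ p.2 ⊆ V ∧ p.1 • p.2 ⊆ g • V ∧ p.1 • p.2 ⊆ f n := by
    intro g V n
    by_cases hV : V ∈ B
    · have hV1 : V ∈ nhds (1 : G) := hB1 V hV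
      have hgV : g • V ∈ nhds g := by
        have := (smul_mem_nhds_smul_iff (a := (1 : G)) g).2 hV1
        simpa using this
      have hgint : g ∈ interior (g • V) := mem_interior_iff_mem_nhds.2 hgV
      obtain ⟨x, hx⟩ := (hdense n).inter_open_nonempty (interior (g • V))
        isOpen_interior ⟨g, hgint⟩
      have hxmem : interior (g • V) ∩ f n ∈ nhds x :=
        (isOpen_interior.inter (hopen n)).mem_nhds hx
      have h1 : x⁻¹ • (interior (g • V) ∩ f n) ∈ nhds (1 : G) := by
        have := (smul_mem_nhds_smul_iff (a := x) x⁻¹).2 hxmem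
        simpa using this
      obtain ⟨V', hV'B, hV'sub⟩ := hB2 _ (Filter.inter_mem h1 hV1)
      refine ⟨(x, V'), fun _ => ⟨hV'B, fun y hy => (hV'sub hy).2, ?_, ?_⟩⟩
      · intro y hy
        obtain ⟨z, hz, rfl⟩ := hy
        have := (hV'sub hz).1
        obtain ⟨w, hw, rfl⟩ := this
        simpa using interior_subset hw.1
      · intro y hy
        obtain ⟨z, hz, rfl⟩ := hy
        have := (hV'sub hz).1
        obtain ⟨w, hw, rfl⟩ := this
        simpa using hw.2
    · exact ⟨(1, ∅), fun h => absurd h hV⟩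
  choose next hnext using key
  -- base case
  obtain ⟨x0, hx0⟩ := hWne
  have hW1 : x0⁻¹ • W ∈ nhds (1 : G) := by
    have := (smul_mem_nhds_smul_iff (a := x0) x0⁻¹).2 (hW.mem_nhds hx0)
    simpa using this
  obtain ⟨V0, hV0B, hV0sub⟩ := hB2 _ hW1
  have hg0 : x0 • V0 ⊆ W := by
    intro y hy
    obtain ⟨z, hz, rfl⟩ := hy
    obtain ⟨w, hw, rfl⟩ := hV0sub hz
    simpa using hw
  -- build the sequence
  let seq : ℕ → G × Set G := fun n =>
    Nat.rec (x0, V0) (fun n ih => next ih.1 ih.2 n) n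
  have hseqS : ∀ n, seq (n + 1) = next (seq n).1 (seq n).2 n := fun n => rfl
  have hBn : ∀ n, (seq n).2 ∈ B := by
    intro n
    induction n with
    | zero => exact hV0B
    | succ n ih => rw [hseqS]; exact (hnext _ _ n ih).1
  have hdec : ∀ n, (seq (n + 1)).2 ⊆ (seq n).2 := fun n => by
    rw [hseqS]; exact (hnext _ _ n (hBn n)).2.1
  have hnest : ∀ n, (seq (n + 1)).1 • (seq (n + 1)).2 ⊆ (seq n).1 • (seq n).2 :=
    fun n => by rw [hseqS]; exact (hnext _ _ n (hBn n)).2.2.1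
  have hfn : ∀ n, (seq (n + 1)).1 • (seq (n + 1)).2 ⊆ f n :=
    fun n => by rw [hseqS]; exact (hnext _ _ n (hBn n)).2.2.2
  obtain ⟨y, hy⟩ := hsc (fun n => (seq n).2) (fun n => (seq n).1) hBn hdec hnest
  refine ⟨y, ?_, ?_⟩
  · exact hg0 (Set.mem_iInter.1 hy 0)
  · exact Set.mem_iInter.2 fun n => hfn n (Set.mem_iInter.1 hy (n + 1))
end

section
/- Let X be a topological space and Y a dense subspace of X. Let 𝒱 be a uniformity on Y compatible with the subspace topology of Y (the topology induced by 𝒱 on Y equals the subspace topology). Suppose that for every V ∈ 𝒱, the closure of V in X × X is a neighborhood of the diagonal Δ_X in X × X. Then there exists a filter 𝒰 on X × X satisfying the axioms of a uniformity (every member contains the diagonal Δ_X; 𝒰 is closed under the flip (x,y) ↦ (y,x); and for every U ∈ 𝒰 there is W ∈ 𝒰 with W ∘ W ⊆ U) such that: (i) 𝒰 is weakly compatible with the topology of X, i.e., for every U ∈ 𝒰 and x ∈ X the section U[x] = {y : (x,y) ∈ U} is a neighborhood of x in X; and (ii) the restriction of 𝒰 to Y × Y (the trace filter {U ∩ (Y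 × Y) : U ∈ 𝒰}) equals 𝒱. -/
open Set Filter Topology Uniformity
open scoped SetRel

/-- Lemma 3.13: let `Y` be a dense subspace of a topological space `X` and `𝒱` a
uniformity on `Y` compatible with the subspace topology, such that the closure in
`X × X` of every `V ∈ 𝒱` is a neighbourhood of the diagonal of `X`.  Then `𝒱` is the
restriction to `Y` of a (weakly) compatible uniformity on `X`: there is a filter on
`X × X` satisfying the uniformity axioms, all of whose sections are neighbourhoods,
whose trace on `Y × Y` is `𝒱`. -/
theorem stmt19 {X : Type*} [TopologicalSpace X] (Y : Set X) (hY : Dense Y)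
    (V : UniformSpace Y)
    (hcomp : V.toTopologicalSpace = (inferInstance : TopologicalSpace Y))
    (hcl : ∀ W ∈ @uniformity Y V,
      closure (Prod.map ((↑) : Y → X) ((↑) : Y → X) '' W) ∈
        nhdsSet (Set.diagonal X)) :
    ∃ U : Filter (X × X),
      (∀ S ∈ U, Set.diagonal X ⊆ S) ∧
      (∀ S ∈ U, Prod.swap ⁻¹' S ∈ U) ∧
      (∀ S ∈ U, ∃ W ∈ U, SetRel.comp W W ⊆ S) ∧
      (∀ S ∈ U, ∀ x : X, {y : X | (x, y) ∈ S} ∈ nhds x) ∧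
      Filter.comap (Prod.map ((↑) : Y → X) ((↑) : Y → X)) U = @uniformity Y V := by
  letI u : UniformSpace Y := V.replaceTopology hcomp.symm
  have hVu : @uniformity Y V = 𝓤 Y :=
    congrArg (fun w : UniformSpace Y => @uniformity Y w)
      (UniformSpace.replaceTopology_eq V hcomp.symm).symm
  rw [hVu] at hcl ⊢
  set m : Y × Y → X × X := Prod.map ((↑) : Y → X) ((↑) : Y → X) with hm
  have hmono : Monotone fun W : Set (Y × Y) => closure (m '' W) :=
    fun _ _ h => closure_mono (image_mono h)
  have hemb : Topology.IsEmbedding m :=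
    Topology.IsEmbedding.subtypeVal.prodMap Topology.IsEmbedding.subtypeVal
  -- preimage of closure of an entourage is contained in a triple composition
  have hpre : ∀ {T : Set (Y × Y)}, T ∈ 𝓤 Y → m ⁻¹' closure (m '' T) ⊆ T ○ (T ○ T) := by
    intro T hT
    rw [← hemb.closure_eq_preimage_closure_image]
    rw [closure_eq_inter_uniformity]
    exact fun p hp => by
      have := Set.mem_iInter.1 hp T
      exact Set.mem_iInter.1 this hT
  set U : Filter (X × X) := (𝓤 Y).lift' fun W => closure (m '' W) with hU
  have hmemU : ∀ S : Set (X × X), S ∈ U ↔ ∃ W ∈ 𝓤 Y, closure (m '' W) ⊆ S :=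
    fun S => mem_lift'_sets hmono
  refine ⟨U, ?_, ?_, ?_, ?_, ?_⟩
  · -- diagonal
    intro S hS
    obtain ⟨W, hW, hWS⟩ := (hmemU S).1 hS
    have h1 : (fun x : X => (x, x)) '' Y ⊆ m '' W := by
      rintro _ ⟨y, hy, rfl⟩
      exact ⟨(⟨y, hy⟩, ⟨y, hy⟩), refl_mem_uniformity hW, rfl⟩
    have h2 : Set.diagonal X ⊆ closure ((fun x : X => (x, x)) '' Y) := by
      rintro ⟨a, b⟩ (hab : a = b)
      subst hab
      exact image_closure_subset_closure_image (continuous_id.prodMk continuous_id)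
        ⟨a, hY a, rfl⟩
    exact (h2.trans (closure_mono h1)).trans hWS
  · -- swap
    intro S hS
    obtain ⟨W, hW, hWS⟩ := (hmemU S).1 hS
    refine (hmemU _).2 ⟨Prod.swap ⁻¹' W, tendsto_swap_uniformity hW, ?_⟩
    have hsub : m '' (Prod.swap ⁻¹' W) ⊆ Prod.swap ⁻¹' (m '' W) := by
      rintro _ ⟨⟨a, b⟩, hab, rfl⟩
      exact ⟨(b, a), hab, rfl⟩
    have hc : IsClosed (Prod.swap ⁻¹' closure (m '' W) : Set (X × X)) :=
      isClosed_closure.preimage continuous_swap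
    exact (closure_minimal (hsub.trans (preimage_mono subset_closure)) hc).trans
      (preimage_mono hWS)
  · -- composition
    intro S hS
    obtain ⟨W, hW, hWS⟩ := (hmemU S).1 hS
    obtain ⟨T1, hT1, hT1W⟩ := comp_mem_uniformity_sets hW
    obtain ⟨T2, hT2, hT21⟩ := comp_mem_uniformity_sets hT1
    obtain ⟨T, hT, hT2'⟩ := comp_mem_uniformity_sets hT2
    have hTT2 : T ⊆ T2 := (subset_comp_self_of_mem_uniformity hT).trans hT2'
    have hT2T1 : T2 ⊆ T1 := (subset_comp_self_of_mem_uniformity hT2).trans hT21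
    refine ⟨closure (m '' T), (hmemU _).2 ⟨T, hT, subset_rfl⟩, ?_⟩
    rintro ⟨x, z⟩ ⟨y, hxy, hyz⟩
    apply hWS
    rw [mem_closure_iff_nhds]
    intro N hN
    obtain ⟨N1, hN1, N2, hN2, hNsub⟩ := mem_nhds_prod_iff.1 hN
    have hyT : closure (m '' T) ∈ nhds (y, y) :=
      mem_nhdsSet_iff_forall.1 (hcl T hT) (y, y) rfl
    obtain ⟨R1, hR1, R2, hR2, hRsub⟩ := mem_nhds_prod_iff.1 hyT
    have h1 := mem_closure_iff_nhds.1 hxy _ (prod_mem_nhds hN1 (inter_mem hR1 hR2))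
    obtain ⟨p, ⟨hp1, hp2⟩, ⟨⟨a, b⟩, habT, hpeq⟩⟩ := h1
    have h2 := mem_closure_iff_nhds.1 hyz _ (prod_mem_nhds (inter_mem hR1 hR2) hN2)
    obtain ⟨q, ⟨hq1, hq2⟩, ⟨⟨c, d⟩, hcdT, hqeq⟩⟩ := h2
    subst hpeq; subst hqeq
    -- (b, c) lies in the closure of m '' T, hence (b,c) ∈ T ○ (T ○ T)
    have hbc : m (b, c) ∈ closure (m '' T) := hRsub ⟨hp2.1, hq1.2⟩
    obtain ⟨z1, hbz1, z2, hz1z2, hz2c⟩ := hpre hT hbc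
    -- chain: a T b T z1 T z2 T c T d
    have hac : (a, c) ∈ T1 := hT21 ⟨z1, hT2' ⟨b, habT, hbz1⟩, hT2' ⟨z2, hz1z2, hz2c⟩⟩
    have had : (a, d) ∈ W := hT1W ⟨c, hac, hT2T1 (hTT2 hcdT)⟩
    exact ⟨m (a, d), hNsub ⟨hp1, hq2⟩, ⟨(a, d), had, rfl⟩⟩
  · -- sections are neighbourhoods
    intro S hS x
    obtain ⟨W, hW, hWS⟩ := (hmemU S).1 hS
    have hx : closure (m '' W) ∈ nhds (x, x) :=
      mem_nhdsSet_iff_forall.1 (hcl W hW) (x, x) rfl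
    obtain ⟨N1, hN1, N2, hN2, hsub⟩ := mem_nhds_prod_iff.1 hx
    exact mem_of_superset hN2 fun y hy => hWS (hsub ⟨mem_of_mem_nhds hN1, hy⟩)
  · -- trace on Y × Y
    apply le_antisymm
    · refine Filter.le_def.2 fun W hW => ?_
      obtain ⟨T2, hT2, hT21⟩ := comp_mem_uniformity_sets hW
      obtain ⟨T, hT, hT2'⟩ := comp_mem_uniformity_sets hT2
      have hTT2 : T ⊆ T2 := (subset_comp_self_of_mem_uniformity hT).trans hT2'
      refine mem_comap.2 ⟨closure (m '' T), (hmemU _).2 ⟨T, hT, subset_rfl⟩, ?_⟩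
      refine (hpre hT).trans ?_
      rintro ⟨a, b⟩ ⟨z, haz, w, hzw, hwb⟩
      exact hT21 ⟨z, hTT2 haz, hT2' ⟨w, hzw, hwb⟩⟩
    · refine Filter.le_def.2 fun s hs => ?_
      obtain ⟨S, hS, hsub⟩ := mem_comap.1 hs
      obtain ⟨W, hW, hWS⟩ := (hmemU S).1 hS
      have : W ⊆ m ⁻¹' S :=
        (subset_preimage_image m W).trans
          ((preimage_mono subset_closure).trans (preimage_mono hWS))
      exact mem_of_superset hW (this.trans hsub)
end
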